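/- Let S = (I, M, O) be a correlation scenario and let M' = (M'_i)_{i∈I} be a collection of subsets M'_i ⊆ M_i defining the disjoint bipartition of S into S' = S_{|M'} and S'^⊥ = S_{|M'^⊥}. Then conv( B(S') ⊙ NS(S'^⊥) ) = PD(S, M'). -/

import Mathlib

open scoped Classical
open MeasureTheory

noncomputable section

/-- A correlation scenario `S = (I, M, O)`: a finite set `I` of parties, for each party `i`
a finite nonempty set `M i` of inputs, and for each input `x : M i` a finite set `O i x`
of outputs with at least two elements. -/
structure Scenario where
  I : Type
  M : I → Type
  O : (i : I) → M i → Type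
  fI : Fintype I
  fM : ∀ i, Fintype (M i)
  fO : ∀ i x, Fintype (O i x)
  hM : ∀ i, Nonempty (M i)
  hO : ∀ i x, 2 ≤ Fintype.card (O i x)

attribute [instance] Scenario.fI Scenario.fM Scenario.fO Scenario.hM

instance Scenario.instNonemptyO (S : Scenario) (i : S.I) (x : S.M i) : Nonempty (S.O i x) :=
  Fintype.card_pos_iff.mp (by have := S.hO i x; omega)

/-- Input strings of a scenario. -/
abbrev InputString (S : Scenario) := ∀ i, S.M i

/-- Output strings for a given input string. -/
abbrev OutputString (S : Scenario) (x : InputString S) := ∀ i, S.O i (x i)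

/-- The ambient real vector space with one coordinate `℘(a|x)` for each pair of an input
string `x` and an output string `a`. -/
abbrev Behaviour (S : Scenario) := (x : InputString S) → OutputString S x → ℝ

/-- `p` is a behaviour: each `p x` is a probability distribution on output strings. -/
def IsBehaviour (S : Scenario) (p : Behaviour S) : Prop :=
  (∀ x a, 0 ≤ p x a) ∧ ∀ x, ∑ a, p x a = 1

/-- The marginal `℘(a_V | x)` of a behaviour on the set `V` of parties, evaluated at the
restriction of `a` to `V`. -/
def marg (S : Scenario) (p : Behaviour S) (x : InputString S) (V : Set S.I)
    (a : OutputString S x) : ℝ :=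
  ∑ b : OutputString S x, if ∀ i ∈ V, b i = a i then p x b else 0

/-- No-signalling: replacing the input of party `i` (all other inputs fixed) leaves the
marginal on `I ∖ {i}` unchanged. -/
def NoSignalling (S : Scenario) (p : Behaviour S) : Prop :=
  ∀ (i : S.I) (x : InputString S) (m : S.M i)
    (a : OutputString S x) (a' : OutputString S (Function.update x i m)),
    (∀ j, j ≠ i → HEq (a j) (a' j)) →
    marg S p x {i}ᶜ a = marg S p (Function.update x i m) {i}ᶜ a'

/-- The set `NS(S)` of no-signalling behaviours. -/
def NSset (S : Scenario) : Set (Behaviour S) :=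
  {p | IsBehaviour S p ∧ NoSignalling S p}

/-- A behaviour is predictable if all its probabilities are `0` or `1`. -/
def Predictable (S : Scenario) (p : Behaviour S) : Prop :=
  ∀ x a, p x a = 0 ∨ p x a = 1

/-- The set `P_NS(S)` of predictable no-signalling behaviours. -/
def PNS (S : Scenario) : Set (Behaviour S) :=
  {p | IsBehaviour S p ∧ NoSignalling S p ∧ Predictable S p}

/-- The Bell-local polytope `B(S) = conv(P_NS(S))`. -/
def BellSet (S : Scenario) : Set (Behaviour S) :=
  convexHull ℝ (PNS S)

/-- `F_x = {i : x i ∈ M' i}`, the context-dependent set of parties choosing an input in the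
distinguished collection `M'`. -/
def Fup (S : Scenario) (M' : ∀ i, Set (S.M i)) (x : InputString S) : Set S.I :=
  {i | x i ∈ M' i}

/-- Partial predictability w.r.t. the collection `M'`: every marginal on a subset of `F_x`
is `{0,1}`-valued. -/
def PartPredictable (S : Scenario) (M' : ∀ i, Set (S.M i)) (p : Behaviour S) : Prop :=
  ∀ (x : InputString S) (V : Set S.I), V ⊆ Fup S M' x →
    ∀ a, marg S p x V a = 0 ∨ marg S p x V a = 1

/-- The set `PP(S, M')` of behaviours partially predictable w.r.t. `M'`. -/
def PPset (S : Scenario) (M' : ∀ i, Set (S.M i)) : Set (Behaviour S) :=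
  {p | IsBehaviour S p ∧ PartPredictable S M' p}

/-- The set `PP_NS(S, M')` of partially predictable no-signalling behaviours. -/
def PPNS (S : Scenario) (M' : ∀ i, Set (S.M i)) : Set (Behaviour S) :=
  {p | IsBehaviour S p ∧ NoSignalling S p ∧ PartPredictable S M' p}

/-- The partially deterministic polytope `PD(S, M') = conv(PP_NS(S, M'))`. -/
def PD (S : Scenario) (M' : ∀ i, Set (S.M i)) : Set (Behaviour S) :=
  convexHull ℝ (PPNS S M')

/-- The restricted scenario `S_{|M'}`: parties `{i : M' i ≠ ∅}`, input sets `M' i`, same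
output sets. -/
def Scenario.restrict (S : Scenario) (M' : ∀ i, Set (S.M i)) : Scenario where
  I := {i : S.I // (M' i).Nonempty}
  M := fun i => ↥(M' i.1)
  O := fun i x => S.O i.1 x.1
  fI := Subtype.fintype _
  fM := fun i => (Set.toFinite (M' i.1)).fintype
  fO := fun i x => S.fO i.1 x.1
  hM := fun i => i.2.to_subtype
  hO := fun i x => S.hO i.1 x.1

/-- A bipartition `(S_{|M'}, S_{|M'^⊥})` is nonredundant unless `M'` is everything or nothing. -/
def Nonredundant (S : Scenario) (M' : ∀ i, Set (S.M i)) : Prop :=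
  ¬ (∀ i, M' i = Set.univ) ∧ ¬ (∀ i, M' i = (∅ : Set (S.M i)))

/-- Extension of an input string of `S` to an input string of the restricted scenario
`S_{|M'}` (choosing arbitrary inputs for the parties `i` with `x i ∉ M' i`). -/
def extendInput (S : Scenario) (M' : ∀ i, Set (S.M i)) (x : InputString S) :
    InputString (S.restrict M') :=
  fun i => if h : x i.1 ∈ M' i.1 then ⟨x i.1, h⟩ else ⟨i.2.some, i.2.some_mem⟩

/-- Extension of an output string of `S` to an output string of the restricted scenario
`S_{|M'}` at the extended input string. -/
def extendOutput (S : Scenario) (M' : ∀ i, Set (S.M i)) (x : InputString S)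
    (a : OutputString S x) : OutputString (S.restrict M') (extendInput S M' x) :=
  fun i =>
    if h : x i.1 ∈ M' i.1 then
      cast (congrArg (S.O i.1)
        (show x i.1 = (extendInput S M' x i).1 by unfold extendInput; simp [h]))
        (a i.1)
    else Classical.arbitrary _

/-- The behaviour product `℘' ⊙ ℘'^⊥` of behaviours on the two halves `S' = S_{|M'}` and
`S'^⊥ = S_{|M'^⊥}` of a disjoint bipartition of `S`:
`(℘'⊙℘'^⊥)(a|x) = ℘'(a_{F_x}|x_{F_x}) · ℘'^⊥(a_{I∖F_x}|x_{I∖F_x})`, the factors being the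
corresponding marginals (well defined for no-signalling behaviours). -/
def bprod (S : Scenario) (M' : ∀ i, Set (S.M i))
    (p' : Behaviour (S.restrict M'))
    (p'' : Behaviour (S.restrict fun i => (M' i)ᶜ)) :
    Behaviour S :=
  fun x a =>
    marg (S.restrict M') p' (extendInput S M' x)
        {i : (S.restrict M').I | x i.1 ∈ M' i.1} (extendOutput S M' x a) *
    marg (S.restrict fun i => (M' i)ᶜ) p'' (extendInput S (fun i => (M' i)ᶜ) x)
        {i : (S.restrict fun i => (M' i)ᶜ).I | x i.1 ∈ (M' i.1)ᶜ}
        (extendOutput S (fun i => (M' i)ᶜ) x a)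

/-- The product `K' ⊙ K''` of two sets of behaviours on the halves of a bipartition. -/
def bprodSet (S : Scenario) (M' : ∀ i, Set (S.M i))
    (K' : Set (Behaviour (S.restrict M')))
    (K'' : Set (Behaviour (S.restrict fun i => (M' i)ᶜ))) :
    Set (Behaviour S) :=
  Set.image2 (bprod S M') K' K''

end

noncomputable section
open Finset

/-- Update a dependent function at one point, transporting the other values along
pointwise type equalities. -/
def dupd {ι : Type} {T T' : ι → Type} (i₀ : ι) (h : ∀ j, j ≠ i₀ → T j = T' j)
    (f : ∀ j, T j) (v : T' i₀) : ∀ j, T' j :=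
  fun j => if hj : j = i₀ then cast (congrArg T' hj.symm) v else cast (h j hj) (f j)

lemma dupd_same {ι : Type} {T T' : ι → Type} (i₀ : ι) (h : ∀ j, j ≠ i₀ → T j = T' j)
    (f : ∀ j, T j) (v : T' i₀) : dupd i₀ h f v i₀ = v :=
  (dif_pos rfl).trans (eq_of_heq (cast_heq _ _))

lemma dupd_noteq {ι : Type} {T T' : ι → Type} (i₀ : ι) (h : ∀ j, j ≠ i₀ → T j = T' j)
    (f : ∀ j, T j) (v : T' i₀) {j : ι} (hj : j ≠ i₀) : HEq (dupd i₀ h f v j) (f j) := by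
  unfold dupd
  rw [dif_neg hj]
  exact cast_heq _ _

lemma update_noteq' {α : Type} {β : α → Type _} {i j : α} (h : j ≠ i) (v : β i)
    (f : ∀ a, β a) : Function.update f i v j = f j := Function.update_of_ne h v f

end
noncomputable section
open Finset

variable {S : Scenario}

lemma marg_congr (p : Behaviour S) (x : InputString S) (V : Set S.I)
    {a a' : OutputString S x} (h : ∀ i ∈ V, a i = a' i) :
    marg S p x V a = marg S p x V a' := by
  unfold marg
  refine Finset.sum_congr rfl fun b _ => ?_
  have : (∀ i ∈ V, b i = a i) ↔ (∀ i ∈ V, b i = a' i) :=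
    ⟨fun hb i hi => (hb i hi).trans (h i hi), fun hb i hi => (hb i hi).trans (h i hi).symm⟩
  simp only [this]

lemma marg_nonneg {p : Behaviour S} {x : InputString S} (hp : ∀ a, 0 ≤ p x a)
    (V : Set S.I) (a : OutputString S x) : 0 ≤ marg S p x V a := by
  refine Finset.sum_nonneg fun b _ => ?_
  split
  · exact hp b
  · exact le_refl 0

lemma marg_univ (p : Behaviour S) (x : InputString S) (a : OutputString S x) :
    marg S p x Set.univ a = p x a := by
  unfold marg
  rw [Finset.sum_eq_single a]
  · simp
  · intro b _ hb
    rw [if_neg]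
    intro hc
    exact hb (funext fun i => hc i trivial)
  · simp

lemma marg_empty {p : Behaviour S} {x : InputString S} (h1 : ∑ a, p x a = 1)
    (a : OutputString S x) : marg S p x ∅ a = 1 := by
  unfold marg
  simpa using h1

lemma marg_add (p q : Behaviour S) (x : InputString S) (V : Set S.I) (a : OutputString S x) :
    marg S (p + q) x V a = marg S p x V a + marg S q x V a := by
  unfold marg
  rw [← Finset.sum_add_distrib]
  refine Finset.sum_congr rfl fun b _ => ?_
  by_cases h : ∀ i ∈ V, b i = a i
  · rw [if_pos h, if_pos h, if_pos h]; rfl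
  · rw [if_neg h, if_neg h, if_neg h]; ring

lemma marg_smul (c : ℝ) (p : Behaviour S) (x : InputString S) (V : Set S.I)
    (a : OutputString S x) : marg S (c • p) x V a = c * marg S p x V a := by
  unfold marg
  rw [Finset.mul_sum]
  refine Finset.sum_congr rfl fun b _ => ?_
  by_cases h : ∀ i ∈ V, b i = a i
  · rw [if_pos h, if_pos h]; rfl
  · rw [if_neg h, if_neg h]; ring

end
noncomputable section
open Finset

variable {S : Scenario}

lemma marg_of_predictable {p : Behaviour S} (hp : IsBehaviour S p) (hpred : Predictable S p)
    (x : InputString S) (V : Set S.I) (a : OutputString S x) :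
    marg S p x V a = 0 ∨ marg S p x V a = 1 := by
  have hsum := hp.2 x
  have hex : ∃ c, p x c ≠ 0 := by
    by_contra h
    push_neg at h
    simp [h] at hsum
  obtain ⟨c₁, hc₁⟩ := hex
  have hc₁1 : p x c₁ = 1 := (hpred x c₁).resolve_left hc₁
  have hz : ∀ c, c ≠ c₁ → p x c = 0 := by
    have h1 : ∑ c ∈ univ.erase c₁, p x c = 0 := by
      rw [← Finset.add_sum_erase univ _ (mem_univ c₁)] at hsum
      linarith
    intro c hc
    exact (Finset.sum_eq_zero_iff_of_nonneg (fun d _ => hp.1 x d)).mp h1 c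
      (Finset.mem_erase.mpr ⟨hc, mem_univ c⟩)
  unfold marg
  rw [Finset.sum_eq_single c₁]
  · by_cases h : ∀ i ∈ V, c₁ i = a i
    · right; rw [if_pos h, hc₁1]
    · left; rw [if_neg h]
  · intro b _ hb
    split
    · exact hz b hb
    · rfl
  · simp

lemma behaviour_split {p : Behaviour S} (hp : IsBehaviour S p) (x : InputString S)
    (V : Set S.I) (a : OutputString S x)
    (h01 : marg S p x V a = 0 ∨ marg S p x V a = 1) :
    p x a = marg S p x V a * marg S p x Vᶜ a := by
  rcases h01 with h | h
  · rw [h, zero_mul]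
    have := (Finset.sum_eq_zero_iff_of_nonneg (fun b _ => by
      split
      · exact hp.1 x b
      · exact le_refl 0)).mp h a (mem_univ a)
    simpa using this
  · rw [h, one_mul]
    have key : ∀ c, ¬(∀ i ∈ V, c i = a i) → p x c = 0 := by
      have h0 : ∑ c : OutputString S x,
          (p x c - if ∀ i ∈ V, c i = a i then p x c else 0) = 0 := by
        rw [Finset.sum_sub_distrib, hp.2 x]
        unfold marg at h
        rw [h]
        ring
      intro c hc
      have := (Finset.sum_eq_zero_iff_of_nonneg (fun b _ => by
        by_cases hb : ∀ i ∈ V, b i = a i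
        · rw [if_pos hb]; linarith
        · rw [if_neg hb]; simpa using hp.1 x b)).mp h0 c (mem_univ c)
      rw [if_neg hc] at this
      linarith
    unfold marg
    rw [Finset.sum_eq_single a]
    · simp
    · intro b _ hb
      by_cases hbV : ∀ i ∈ V, b i = a i
      · split
        · next hcomp =>
          exact absurd (funext fun i => by
            by_cases hi : i ∈ V
            · exact hbV i hi
            · exact hcomp i hi) hb
        · rfl
      · split
        · exact key b hbV
        · rfl
    · simp
noncomputable section
open Finset

variable {S : Scenario}

lemma marg_eq_sum_marg_compl (p : Behaviour S) (x : InputString S) {V : Set S.I} {i₀ : S.I}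
    (hi : i₀ ∉ V) (a : OutputString S x) :
    marg S p x V a =
      ∑ c : OutputString S x,
        if (∀ i ∈ V, c i = a i) ∧ c i₀ = a i₀ then marg S p x {i₀}ᶜ c else 0 := by
  have step1 : ∀ c : OutputString S x,
      (if (∀ i ∈ V, c i = a i) ∧ c i₀ = a i₀ then marg S p x {i₀}ᶜ c else 0)
        = ∑ d : OutputString S x,
            if ((∀ i ∈ V, c i = a i) ∧ c i₀ = a i₀) ∧ (∀ j ∈ ({i₀}ᶜ : Set S.I), d j = c j)
            then p x d else 0 := by
    intro c
    by_cases hc : (∀ i ∈ V, c i = a i) ∧ c i₀ = a i₀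
    · rw [if_pos hc]
      unfold marg
      refine Finset.sum_congr rfl fun d _ => ?_
      by_cases hd : ∀ i ∈ ({i₀}ᶜ : Set S.I), d i = c i
      · rw [if_pos hd, if_pos (And.intro hc hd)]
      · rw [if_neg hd, if_neg (fun h => hd h.2)]
    · rw [if_neg hc]
      symm
      refine Finset.sum_eq_zero fun d _ => ?_
      rw [if_neg (fun h => hc h.1)]
  symm
  calc ∑ c : OutputString S x,
        (if (∀ i ∈ V, c i = a i) ∧ c i₀ = a i₀ then marg S p x {i₀}ᶜ c else 0)
      = ∑ c : OutputString S x, ∑ d : OutputString S x,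
          (if ((∀ i ∈ V, c i = a i) ∧ c i₀ = a i₀) ∧ (∀ j ∈ ({i₀}ᶜ : Set S.I), d j = c j)
            then p x d else 0) := Finset.sum_congr rfl fun c _ => step1 c
    _ = ∑ d : OutputString S x, ∑ c : OutputString S x,
          (if ((∀ i ∈ V, c i = a i) ∧ c i₀ = a i₀) ∧ (∀ j ∈ ({i₀}ᶜ : Set S.I), d j = c j)
            then p x d else 0) := Finset.sum_comm
    _ = ∑ d : OutputString S x, (if ∀ i ∈ V, d i = a i then p x d else 0) := ?_
    _ = marg S p x V a := rfl
  refine Finset.sum_congr rfl fun d _ => ?_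
  obtain ⟨c₀, hne, heq0⟩ : ∃ c₀ : OutputString S x,
      (∀ j, j ≠ i₀ → c₀ j = d j) ∧ c₀ i₀ = a i₀ :=
    ⟨dupd i₀ (fun j _ => rfl) d (a i₀),
      fun j h => eq_of_heq (dupd_noteq i₀ (fun j _ => rfl) d (a i₀) h),
      dupd_same i₀ (fun j _ => rfl) d (a i₀)⟩
  rw [Finset.sum_eq_single c₀]
  · have hiff : (((∀ i ∈ V, c₀ i = a i) ∧ c₀ i₀ = a i₀) ∧
        (∀ j ∈ ({i₀}ᶜ : Set S.I), d j = c₀ j)) ↔ (∀ i ∈ V, d i = a i) := by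
      constructor
      · rintro ⟨⟨h1, _⟩, _⟩ i hiV
        have hne' : i ≠ i₀ := fun he => hi (by rw [← he]; exact hiV)
        rw [← hne i hne']
        exact h1 i hiV
      · intro h
        refine ⟨⟨fun i hiV => ?_, heq0⟩, fun j hj => ?_⟩
        · have hne' : i ≠ i₀ := fun he => hi (by rw [← he]; exact hiV)
          rw [hne i hne']
          exact h i hiV
        · exact (hne j hj).symm
    rw [if_congr hiff rfl rfl]
  · intro c _ hc
    rw [if_neg]
    rintro ⟨⟨_, h2⟩, h3⟩
    apply hc
    funext j
    by_cases hj : j = i₀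
    · subst hj
      exact h2.trans heq0.symm
    · rw [hne j hj]
      exact (h3 j hj).symm
  · simp

lemma marg_update {p : Behaviour S} (hns : NoSignalling S p) {x : InputString S} {i₀ : S.I}
    (m : S.M i₀) {V : Set S.I} (hi : i₀ ∉ V) (a : OutputString S x)
    (a' : OutputString S (Function.update x i₀ m)) (hag : ∀ i ∈ V, HEq (a i) (a' i)) :
    marg S p x V a = marg S p (Function.update x i₀ m) V a' := by
  rw [marg_eq_sum_marg_compl p x hi a, marg_eq_sum_marg_compl p _ hi a',
    ← Finset.sum_filter, ← Finset.sum_filter]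
  have hxx : ∀ j, j ≠ i₀ → S.O j (x j) = S.O j (Function.update x i₀ m j) :=
    fun j h => congrArg (S.O j) (Function.update_of_ne h m x).symm
  obtain ⟨φ, hφ, hφ0⟩ : ∃ φ : OutputString S x → OutputString S (Function.update x i₀ m),
      (∀ c j (_ : j ≠ i₀), HEq (φ c j) (c j)) ∧ (∀ c, φ c i₀ = a' i₀) :=
    ⟨fun c => dupd i₀ hxx c (a' i₀), fun c j h => dupd_noteq i₀ hxx c (a' i₀) h,
      fun c => dupd_same i₀ hxx c (a' i₀)⟩
  obtain ⟨ψ, hψ, hψ0⟩ : ∃ ψ : OutputString S (Function.update x i₀ m) → OutputString S x,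
      (∀ c j (_ : j ≠ i₀), HEq (ψ c j) (c j)) ∧ (∀ c, ψ c i₀ = a i₀) :=
    ⟨fun c => dupd i₀ (fun j hj => (hxx j hj).symm) c (a i₀),
      fun c j h => dupd_noteq i₀ (fun j hj => (hxx j hj).symm) c (a i₀) h,
      fun c => dupd_same i₀ (fun j hj => (hxx j hj).symm) c (a i₀)⟩
  have htyV : ∀ i, i ∈ V → i ≠ i₀ := fun i hiV he => hi (by rw [← he]; exact hiV)
  refine Finset.sum_nbij' φ ψ ?_ ?_ ?_ ?_ ?_
  · intro c hc
    rw [Finset.mem_filter] at hc ⊢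
    refine ⟨mem_univ _, fun i hiV => ?_, hφ0 c⟩
    exact eq_of_heq (((hφ c i (htyV i hiV)).trans (heq_of_eq (hc.2.1 i hiV))).trans
      (hag i hiV))
  · intro c hc
    rw [Finset.mem_filter] at hc ⊢
    refine ⟨mem_univ _, fun i hiV => ?_, hψ0 c⟩
    exact eq_of_heq (((hψ c i (htyV i hiV)).trans (heq_of_eq (hc.2.1 i hiV))).trans
      (hag i hiV).symm)
  · intro c hc
    rw [Finset.mem_filter] at hc
    funext j
    by_cases hj : j = i₀
    · subst hj
      exact (hψ0 _).trans hc.2.2.symm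
    · exact eq_of_heq ((hψ (φ c) j hj).trans (hφ c j hj))
  · intro c hc
    rw [Finset.mem_filter] at hc
    funext j
    by_cases hj : j = i₀
    · subst hj
      exact (hφ0 _).trans hc.2.2.symm
    · exact eq_of_heq ((hφ (ψ c) j hj).trans (hψ c j hj))
  · intro c _
    exact hns i₀ x m c (φ c) (fun j hj => (hφ c j hj).symm)

lemma marg_ns_invariant {p : Behaviour S} (hns : NoSignalling S p)
    (x z : InputString S) (V : Set S.I) (a : OutputString S x) (b : OutputString S z)
    (hxz : ∀ i ∈ V, x i = z i) (hab : ∀ i ∈ V, HEq (a i) (b i)) :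
    marg S p x V a = marg S p z V b := by
  suffices h : ∀ (n : ℕ) (x z : InputString S) (V : Set S.I) (a : OutputString S x)
      (b : OutputString S z),
      (Finset.univ.filter fun i => x i ≠ z i).card ≤ n → (∀ i ∈ V, x i = z i) →
      (∀ i ∈ V, HEq (a i) (b i)) → marg S p x V a = marg S p z V b by
    exact h _ x z V a b le_rfl hxz hab
  intro n
  induction n with
  | zero =>
    intro x z V a b hcard hxz hab
    have hxzeq : x = z := by
      funext i
      by_contra h
      have hmem : i ∈ Finset.univ.filter fun i => x i ≠ z i :=
        Finset.mem_filter.mpr ⟨mem_univ i, h⟩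
      have := Finset.card_pos.mpr ⟨i, hmem⟩
      omega
    subst hxzeq
    exact marg_congr p x V fun i hiV => eq_of_heq (hab i hiV)
  | succ n ih =>
    intro x z V a b hcard hxz hab
    by_cases hxzeq : x = z
    · subst hxzeq
      exact marg_congr p x V fun i hiV => eq_of_heq (hab i hiV)
    · obtain ⟨i₀, hi₀⟩ := Function.ne_iff.mp hxzeq
      have hi₀V : i₀ ∉ V := fun h => hi₀ (hxz i₀ h)
      have hty : S.O i₀ (z i₀) = S.O i₀ (Function.update x i₀ (z i₀) i₀) :=
        (congrArg (S.O i₀) (Function.update_self i₀ (z i₀) x)).symm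
      obtain ⟨a₁, ha₁⟩ : ∃ a₁ : OutputString S (Function.update x i₀ (z i₀)),
          ∀ j, j ≠ i₀ → HEq (a₁ j) (a j) :=
        ⟨dupd i₀ (fun j hj => congrArg (S.O j) (Function.update_of_ne hj (z i₀) x).symm) a
          (cast hty (b i₀)),
          fun j h => dupd_noteq i₀
            (fun j hj => congrArg (S.O j) (Function.update_of_ne hj (z i₀) x).symm) a
            (cast hty (b i₀)) h⟩
      have step1 := marg_update hns (z i₀) hi₀V a a₁
        (fun i hiV => (ha₁ i (fun he => hi₀V (by rw [← he]; exact hiV))).symm)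
      rw [step1]
      refine ih (Function.update x i₀ (z i₀)) z V a₁ b ?_ ?_ ?_
      · have hsub : (Finset.univ.filter fun i => Function.update x i₀ (z i₀) i ≠ z i) ⊆
            (Finset.univ.filter fun i => x i ≠ z i).erase i₀ := by
          intro j hj
          rw [Finset.mem_filter] at hj
          have hjne : j ≠ i₀ := by
            intro he
            subst he
            exact hj.2 (Function.update_self j (z j) x)
          refine Finset.mem_erase.mpr ⟨hjne, Finset.mem_filter.mpr ⟨mem_univ _, ?_⟩⟩
          have h2 := hj.2
          rwa [Function.update_of_ne hjne] at h2
        calc (Finset.univ.filter fun i => Function.update x i₀ (z i₀) i ≠ z i).card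
            ≤ ((Finset.univ.filter fun i => x i ≠ z i).erase i₀).card :=
              Finset.card_le_card hsub
          _ = (Finset.univ.filter fun i => x i ≠ z i).card - 1 :=
              Finset.card_erase_of_mem (Finset.mem_filter.mpr ⟨mem_univ _, hi₀⟩)
          _ ≤ n := by omega
      · intro i hiV
        rw [Function.update_of_ne (fun he => hi₀V (by rw [← he]; exact hiV))]
        exact hxz i hiV
      · intro i hiV
        exact (ha₁ i (fun he => hi₀V (by rw [← he]; exact hiV))).trans (hab i hiV)
noncomputable section
open Finset

variable (S : Scenario) (N : ∀ i, Set (S.M i))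

/-- Canonical extension of an input string of the restricted scenario to the full scenario. -/
def fullIn (y : InputString (S.restrict N)) : InputString S :=
  fun i => if h : (N i).Nonempty then (y ⟨i, h⟩).val else Classical.arbitrary _

lemma fullIn_pos (y : InputString (S.restrict N)) (i : S.I) (h : (N i).Nonempty) :
    fullIn S N y i = (y ⟨i, h⟩).val := dif_pos h

/-- Canonical extension of an output string of the restricted scenario. -/
def liftOut (y : InputString (S.restrict N)) (b : OutputString (S.restrict N) y) :
    OutputString S (fullIn S N y) :=
  fun i =>
    if h : (N i).Nonempty then
      cast (congrArg (S.O i) (fullIn_pos S N y i h).symm) (b ⟨i, h⟩)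
    else Classical.arbitrary _

lemma liftOut_heq (y : InputString (S.restrict N)) (b : OutputString (S.restrict N) y)
    (i : S.I) (h : (N i).Nonempty) : HEq (liftOut S N y b i) (b ⟨i, h⟩) := by
  unfold liftOut
  rw [dif_pos h]
  exact cast_heq _ _

/-- Restriction of a behaviour to the restricted scenario, via marginals at canonically
extended inputs. -/
def resB (p : Behaviour S) : Behaviour (S.restrict N) :=
  fun y b => marg S p (fullIn S N y) {i | (N i).Nonempty} (liftOut S N y b)

variable {S N}

/-- The output string of the restricted scenario determined by a full output string. -/
lemma exists_resOut (y : InputString (S.restrict N)) (c : OutputString S (fullIn S N y)) :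
    ∃ b₀ : OutputString (S.restrict N) y, ∀ i' : (S.restrict N).I, HEq (b₀ i') (c i'.1) := by
  refine ⟨fun i' => cast ?_ (c i'.1), fun i' => cast_heq _ _⟩
  exact congrArg (S.O i'.1) (fullIn_pos S N y i'.1 i'.2)

lemma resOut_cond_iff (y : InputString (S.restrict N)) (c : OutputString S (fullIn S N y))
    (b₀ : OutputString (S.restrict N) y) (hb₀ : ∀ i' : (S.restrict N).I, HEq (b₀ i') (c i'.1))
    (bt : OutputString (S.restrict N) y) :
    (∀ i ∈ {i | (N i).Nonempty}, c i = liftOut S N y bt i) ↔ bt = b₀ := by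
  constructor
  · intro h
    funext i'
    exact eq_of_heq (((liftOut_heq S N y bt i'.1 i'.2).symm.trans
      (heq_of_eq (h i'.1 i'.2)).symm).trans (hb₀ i').symm)
  · intro hbt i h
    rw [hbt]
    exact (eq_of_heq ((liftOut_heq S N y b₀ i h).trans (hb₀ ⟨i, h⟩))).symm

lemma marg_resB (p : Behaviour S) (y : InputString (S.restrict N))
    (U : Set (S.restrict N).I) (b : OutputString (S.restrict N) y) :
    marg (S.restrict N) (resB S N p) y U b
      = marg S p (fullIn S N y) {i | ∃ h : (N i).Nonempty, (⟨i, h⟩ : (S.restrict N).I) ∈ U}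
          (liftOut S N y b) := by
  obtain ⟨W, hW⟩ : ∃ W : Set S.I,
      W = {i | ∃ h : (N i).Nonempty, (⟨i, h⟩ : (S.restrict N).I) ∈ U} := ⟨_, rfl⟩
  rw [← hW]
  calc marg (S.restrict N) (resB S N p) y U b
      = ∑ bt : OutputString (S.restrict N) y,
          (if ∀ i' ∈ U, bt i' = b i' then
            marg S p (fullIn S N y) {i | (N i).Nonempty} (liftOut S N y bt) else 0) := rfl
    _ = ∑ bt : OutputString (S.restrict N) y, ∑ c : OutputString S (fullIn S N y),
          (if (∀ i' ∈ U, bt i' = b i') ∧ (∀ i ∈ {i | (N i).Nonempty},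
              c i = liftOut S N y bt i) then p (fullIn S N y) c else 0) := ?_
    _ = ∑ c : OutputString S (fullIn S N y), ∑ bt : OutputString (S.restrict N) y,
          (if (∀ i' ∈ U, bt i' = b i') ∧ (∀ i ∈ {i | (N i).Nonempty},
              c i = liftOut S N y bt i) then p (fullIn S N y) c else 0) := Finset.sum_comm
    _ = ∑ c : OutputString S (fullIn S N y),
          (if ∀ i ∈ W, c i = liftOut S N y b i then p (fullIn S N y) c else 0) := ?_
    _ = marg S p (fullIn S N y) W (liftOut S N y b) := rfl
  · refine Finset.sum_congr rfl fun bt _ => ?_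
    by_cases hc : ∀ i' ∈ U, bt i' = b i'
    · rw [if_pos hc]
      unfold marg
      refine Finset.sum_congr rfl fun c _ => ?_
      by_cases hd : ∀ i ∈ {i | (N i).Nonempty}, c i = liftOut S N y bt i
      · rw [if_pos hd, if_pos (And.intro hc hd)]
      · rw [if_neg hd, if_neg (fun h => hd h.2)]
    · rw [if_neg hc]
      symm
      refine Finset.sum_eq_zero fun c _ => ?_
      rw [if_neg (fun h => hc h.1)]
  · refine Finset.sum_congr rfl fun c _ => ?_
    obtain ⟨b₀, hb₀⟩ := exists_resOut y c
    rw [Finset.sum_eq_single b₀]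
    · have hiff : (∀ i' ∈ U, b₀ i' = b i') ↔
          (∀ i ∈ W, c i = liftOut S N y b i) := by
        constructor
        · intro h i hiW
          rw [hW] at hiW
          obtain ⟨hi, hiU⟩ := hiW
          exact eq_of_heq (((hb₀ ⟨i, hi⟩).symm.trans
            (heq_of_eq (h ⟨i, hi⟩ hiU))).trans (liftOut_heq S N y b i hi).symm)
        · intro h i' hi'U
          have hc := h i'.1 (by rw [hW]; exact ⟨i'.2, hi'U⟩)
          exact eq_of_heq (((hb₀ i').trans (heq_of_eq hc)).trans
            (liftOut_heq S N y b i'.1 i'.2))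
      by_cases hu : ∀ i' ∈ U, b₀ i' = b i'
      · rw [if_pos (And.intro hu ((resOut_cond_iff y c b₀ hb₀ b₀).mpr rfl)),
          if_pos (hiff.mp hu)]
      · rw [if_neg (fun h => hu h.1), if_neg (fun h => hu (hiff.mpr h))]
    · intro bt _ hbt
      rw [if_neg (fun h => hbt ((resOut_cond_iff y c b₀ hb₀ bt).mp h.2))]
    · simp
  
lemma resB_isBehaviour {p : Behaviour S} (hp : IsBehaviour S p) :
    IsBehaviour (S.restrict N) (resB S N p) := by
  constructor
  · intro y b
    exact marg_nonneg (fun c => hp.1 _ c) _ _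
  · intro y
    calc ∑ b : OutputString (S.restrict N) y, resB S N p y b
        = ∑ b : OutputString (S.restrict N) y, ∑ c : OutputString S (fullIn S N y),
            (if ∀ i ∈ {i | (N i).Nonempty}, c i = liftOut S N y b i
              then p (fullIn S N y) c else 0) := rfl
      _ = ∑ c : OutputString S (fullIn S N y), ∑ b : OutputString (S.restrict N) y,
            (if ∀ i ∈ {i | (N i).Nonempty}, c i = liftOut S N y b i
              then p (fullIn S N y) c else 0) := Finset.sum_comm
      _ = ∑ c : OutputString S (fullIn S N y), p (fullIn S N y) c := ?_
      _ = 1 := hp.2 _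
    refine Finset.sum_congr rfl fun c _ => ?_
    obtain ⟨b₀, hb₀⟩ := exists_resOut y c
    rw [Finset.sum_eq_single b₀]
    · rw [if_pos ((resOut_cond_iff y c b₀ hb₀ b₀).mpr rfl)]
    · intro bt _ hbt
      rw [if_neg (fun h => hbt ((resOut_cond_iff y c b₀ hb₀ bt).mp h))]
    · simp

lemma resB_ns {p : Behaviour S} (hns : NoSignalling S p) :
    NoSignalling (S.restrict N) (resB S N p) := by
  intro i₀' y m' b b' hbb'
  rw [marg_resB, marg_resB]
  apply marg_ns_invariant hns
  · rintro i ⟨hi, hiU⟩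
    have hne : (⟨i, hi⟩ : (S.restrict N).I) ≠ i₀' :=
      fun he => hiU (Set.mem_singleton_iff.mpr he)
    rw [fullIn_pos S N y i hi, fullIn_pos S N _ i hi]
    exact congrArg Subtype.val (update_noteq' hne m' y).symm

  · rintro i ⟨hi, hiU⟩
    have hne : (⟨i, hi⟩ : (S.restrict N).I) ≠ i₀' :=
      fun he => hiU (Set.mem_singleton_iff.mpr he)
    refine ((liftOut_heq S N y b i hi).trans (hbb' ⟨i, hi⟩ hne)).trans ?_
    exact (liftOut_heq S N _ b' i hi).symm
noncomputable section
open Finset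

/-- Indicator of a proposition, with a once-and-for-all fixed decidability instance. -/
def chi (P : Prop) : ℝ := if P then 1 else 0

lemma chi_pos {P : Prop} (h : P) : chi P = 1 := if_pos h

lemma chi_neg {P : Prop} (h : ¬P) : chi P = 0 := if_neg h

lemma chi_congr {P Q : Prop} (h : P ↔ Q) : chi P = chi Q := by
  by_cases hP : P
  · rw [chi_pos hP, chi_pos (h.mp hP)]
  · rw [chi_neg hP, chi_neg (fun hq => hP (h.mpr hq))]

lemma ite_eq_chi_mul {P : Prop} [Decidable P] (A : ℝ) :
    (if P then A else 0) = chi P * A := by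
  by_cases h : P
  · rw [if_pos h, chi_pos h, one_mul]
  · rw [if_neg h, chi_neg h, zero_mul]

lemma chi3_merge (A B C : Prop) (K : ℝ) :
    chi A * (chi B * (chi C * K)) = chi (A ∧ B ∧ C) * K := by
  by_cases hA : A <;> by_cases hB : B <;> by_cases hC : C <;>
    simp [chi_pos, chi_neg, hA, hB, hC]

lemma chi2_merge (A B : Prop) (K L : ℝ) :
    (chi A * K) * (chi B * L) = chi (A ∧ B) * (K * L) := by
  by_cases hA : A <;> by_cases hB : B <;>
    simp [chi_pos, chi_neg, hA, hB] <;> ring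

lemma marg_chi (T : Scenario) (p : Behaviour T) (x : InputString T) (V : Set T.I)
    (a : OutputString T x) :
    marg T p x V a = ∑ b : OutputString T x, chi (∀ i ∈ V, b i = a i) * p x b := by
  refine Finset.sum_congr rfl fun b _ => ?_
  exact ite_eq_chi_mul _

lemma chi_sum_expand {α β : Type} [Fintype α] [Fintype β] (C : Prop) (P : α → Prop)
    (Q : β → Prop) (f : α → ℝ) (g : β → ℝ) :
    chi C * ((∑ u, chi (P u) * f u) * (∑ v, chi (Q v) * g v))
      = ∑ u, ∑ v, chi C * (chi (P u) * (chi (Q v) * (f u * g v))) := by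
  rw [Finset.sum_mul_sum, Finset.mul_sum]
  refine Finset.sum_congr rfl fun u _ => ?_
  rw [Finset.mul_sum]
  refine Finset.sum_congr rfl fun v _ => ?_
  ring

lemma chi2b_merge (A B : Prop) (K : ℝ) :
    chi A * (chi B * K) = chi (A ∧ B) * K := by
  by_cases hA : A <;> by_cases hB : B <;> simp [chi_pos, chi_neg, hA, hB]

lemma chi_sum_expand0 {α β : Type} [Fintype α] [Fintype β] (P : α → Prop)
    (Q : β → Prop) (f : α → ℝ) (g : β → ℝ) :
    (∑ u, chi (P u) * f u) * (∑ v, chi (Q v) * g v)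
      = ∑ u, ∑ v, chi (P u) * (chi (Q v) * (f u * g v)) := by
  rw [Finset.sum_mul_sum]
  refine Finset.sum_congr rfl fun u _ => ?_
  refine Finset.sum_congr rfl fun v _ => ?_
  ring

lemma chi_sum_split {α β : Type} [Fintype α] [Fintype β] (P : α → Prop) (Q : β → Prop)
    (f : α → ℝ) (g : β → ℝ) :
    (∑ u, ∑ v, chi (P u ∧ Q v) * (f u * g v))
      = (∑ u, chi (P u) * f u) * (∑ v, chi (Q v) * g v) := by
  rw [Finset.sum_mul_sum]
  refine Finset.sum_congr rfl fun u _ => ?_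
  refine Finset.sum_congr rfl fun v _ => ?_
  exact (chi2_merge _ _ _ _).symm

variable {S : Scenario} {M' : ∀ i, Set (S.M i)}

lemma bprod_def (q' : Behaviour (S.restrict M')) (q'' : Behaviour (S.restrict fun i => (M' i)ᶜ))
    (x : InputString S) (a : OutputString S x) :
    bprod S M' q' q'' x a =
      marg (S.restrict M') q' (extendInput S M' x) {i : (S.restrict M').I | x i.1 ∈ M' i.1}
          (extendOutput S M' x a) *
        marg (S.restrict fun i => (M' i)ᶜ) q'' (extendInput S (fun i => (M' i)ᶜ) x)
          {i : (S.restrict fun i => (M' i)ᶜ).I | x i.1 ∈ (M' i.1)ᶜ}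
          (extendOutput S (fun i => (M' i)ᶜ) x a) := rfl

lemma extendInput_val (x : InputString S) (i : (S.restrict M').I) (h : x i.1 ∈ M' i.1) :
    (extendInput S M' x i).val = x i.1 := congrArg Subtype.val (dif_pos h)

lemma extendOutput_heq (x : InputString S) (a : OutputString S x) (i : (S.restrict M').I)
    (h : x i.1 ∈ M' i.1) : HEq (extendOutput S M' x a i) (a i.1) := by
  unfold extendOutput
  rw [dif_pos h]
  exact cast_heq _ _

lemma exists_glueOut (x : InputString S)
    (u : OutputString (S.restrict M') (extendInput S M' x))
    (v : OutputString (S.restrict fun i => (M' i)ᶜ) (extendInput S (fun i => (M' i)ᶜ) x)) :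
    ∃ c₀ : OutputString S x,
      (∀ i (h : x i ∈ M' i), HEq (c₀ i) (u ⟨i, ⟨x i, h⟩⟩)) ∧
      (∀ i (h : x i ∉ M' i), HEq (c₀ i) (v ⟨i, ⟨x i, h⟩⟩)) := by
  refine ⟨fun i =>
    if h : x i ∈ M' i then
      cast (congrArg (S.O i) (extendInput_val x ⟨i, ⟨x i, h⟩⟩ h)) (u ⟨i, ⟨x i, h⟩⟩)
    else
      cast (congrArg (S.O i) (extendInput_val (M' := fun i => (M' i)ᶜ) x ⟨i, ⟨x i, h⟩⟩ h))
        (v ⟨i, ⟨x i, h⟩⟩), fun i h => ?_, fun i h => ?_⟩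
  · simp only [dif_pos h]
    exact cast_heq _ _
  · simp only [dif_neg h]
    exact cast_heq _ _

lemma glue_cond_iff (x : InputString S)
    (u : OutputString (S.restrict M') (extendInput S M' x))
    (v : OutputString (S.restrict fun i => (M' i)ᶜ) (extendInput S (fun i => (M' i)ᶜ) x))
    (c₀ : OutputString S x)
    (hu : ∀ i (h : x i ∈ M' i), HEq (c₀ i) (u ⟨i, ⟨x i, h⟩⟩))
    (hv : ∀ i (h : x i ∉ M' i), HEq (c₀ i) (v ⟨i, ⟨x i, h⟩⟩))
    (c : OutputString S x) :
    ((∀ i' ∈ {i : (S.restrict M').I | x i.1 ∈ M' i.1},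
        u i' = extendOutput S M' x c i') ∧
      (∀ i' ∈ {i : (S.restrict fun i => (M' i)ᶜ).I | x i.1 ∈ (M' i.1)ᶜ},
        v i' = extendOutput S (fun i => (M' i)ᶜ) x c i')) ↔ c = c₀ := by
  constructor
  · rintro ⟨h1, h2⟩
    funext i
    by_cases h : x i ∈ M' i
    · have hh := h1 ⟨i, ⟨x i, h⟩⟩ h
      exact eq_of_heq (((extendOutput_heq x c ⟨i, ⟨x i, h⟩⟩ h).symm.trans
        (heq_of_eq hh.symm)).trans (hu i h).symm)
    · have hh := h2 ⟨i, ⟨x i, h⟩⟩ h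
      exact eq_of_heq (((extendOutput_heq (M' := fun i => (M' i)ᶜ) x c ⟨i, ⟨x i, h⟩⟩ h).symm.trans
        (heq_of_eq hh.symm)).trans (hv i h).symm)
  · intro hc
    subst hc
    refine ⟨fun i' hi' => ?_, fun i' hi' => ?_⟩
    · exact eq_of_heq ((hu i'.1 hi').symm.trans (extendOutput_heq x c i' hi').symm)
    · exact eq_of_heq ((hv i'.1 hi').symm.trans
        (extendOutput_heq (M' := fun i => (M' i)ᶜ) x c i' hi').symm)

lemma glue_agree_iff (x : InputString S) (V : Set S.I) (a : OutputString S x)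
    (u : OutputString (S.restrict M') (extendInput S M' x))
    (v : OutputString (S.restrict fun i => (M' i)ᶜ) (extendInput S (fun i => (M' i)ᶜ) x))
    (c₀ : OutputString S x)
    (hu : ∀ i (h : x i ∈ M' i), HEq (c₀ i) (u ⟨i, ⟨x i, h⟩⟩))
    (hv : ∀ i (h : x i ∉ M' i), HEq (c₀ i) (v ⟨i, ⟨x i, h⟩⟩))
    (A₁ : Set (S.restrict M').I) (A₂ : Set (S.restrict fun i => (M' i)ᶜ).I)
    (hA₁ : A₁ = {i' | i'.1 ∈ V ∧ x i'.1 ∈ M' i'.1})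
    (hA₂ : A₂ = {i' | i'.1 ∈ V ∧ x i'.1 ∈ (M' i'.1)ᶜ}) :
    (∀ i ∈ V, c₀ i = a i) ↔
      ((∀ i' ∈ A₁, u i' = extendOutput S M' x a i') ∧
        (∀ i' ∈ A₂, v i' = extendOutput S (fun i => (M' i)ᶜ) x a i')) := by
  constructor
  · intro h
    constructor
    · intro i' hi'
      rw [hA₁] at hi'
      obtain ⟨h1, h2⟩ := hi'
      exact eq_of_heq (((hu i'.1 h2).symm.trans (heq_of_eq (h i'.1 h1))).trans
        (extendOutput_heq x a i' h2).symm)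
    · intro i' hi'
      rw [hA₂] at hi'
      obtain ⟨h1, h2⟩ := hi'
      exact eq_of_heq (((hv i'.1 h2).symm.trans (heq_of_eq (h i'.1 h1))).trans
        (extendOutput_heq (M' := fun i => (M' i)ᶜ) x a i' h2).symm)
  · rintro ⟨h1, h2⟩ i hiV
    by_cases h : x i ∈ M' i
    · have hm : (⟨i, ⟨x i, h⟩⟩ : (S.restrict M').I) ∈ A₁ := by
        rw [hA₁]; exact ⟨hiV, h⟩
      exact eq_of_heq (((hu i h).trans (heq_of_eq (h1 _ hm))).trans
        (extendOutput_heq x a ⟨i, ⟨x i, h⟩⟩ h))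
    · have hm : (⟨i, ⟨x i, h⟩⟩ : (S.restrict fun i => (M' i)ᶜ).I) ∈ A₂ := by
        rw [hA₂]; exact ⟨hiV, h⟩
      exact eq_of_heq (((hv i h).trans (heq_of_eq (h2 _ hm))).trans
        (extendOutput_heq (M' := fun i => (M' i)ᶜ) x a ⟨i, ⟨x i, h⟩⟩ h))

set_option maxHeartbeats 1000000 in
lemma marg_bprod (q' : Behaviour (S.restrict M'))
    (q'' : Behaviour (S.restrict fun i => (M' i)ᶜ))
    (x : InputString S) (V : Set S.I) (a : OutputString S x)
    (A₁ : Set (S.restrict M').I) (A₂ : Set (S.restrict fun i => (M' i)ᶜ).I)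
    (hA₁ : A₁ = {i' | i'.1 ∈ V ∧ x i'.1 ∈ M' i'.1})
    (hA₂ : A₂ = {i' | i'.1 ∈ V ∧ x i'.1 ∈ (M' i'.1)ᶜ}) :
    marg S (bprod S M' q' q'') x V a
      = marg (S.restrict M') q' (extendInput S M' x) A₁ (extendOutput S M' x a)
        * marg (S.restrict fun i => (M' i)ᶜ) q'' (extendInput S (fun i => (M' i)ᶜ) x) A₂
            (extendOutput S (fun i => (M' i)ᶜ) x a) := by
  calc marg S (bprod S M' q' q'') x V a
      = ∑ c : OutputString S x,
          chi (∀ i ∈ V, c i = a i) * bprod S M' q' q'' x c := marg_chi _ _ _ _ _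
    _ = ∑ c : OutputString S x,
          ∑ u : OutputString (S.restrict M') (extendInput S M' x),
          ∑ v : OutputString (S.restrict fun i => (M' i)ᶜ) (extendInput S (fun i => (M' i)ᶜ) x),
          chi (∀ i ∈ V, c i = a i) *
            (chi (∀ i' ∈ {i : (S.restrict M').I | x i.1 ∈ M' i.1},
                u i' = extendOutput S M' x c i') *
              (chi (∀ i' ∈ {i : (S.restrict fun i => (M' i)ᶜ).I | x i.1 ∈ (M' i.1)ᶜ},
                  v i' = extendOutput S (fun i => (M' i)ᶜ) x c i') *
                (q' (extendInput S M' x) u *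
                  q'' (extendInput S (fun i => (M' i)ᶜ) x) v))) := ?_
    _ = ∑ u : OutputString (S.restrict M') (extendInput S M' x),
          ∑ v : OutputString (S.restrict fun i => (M' i)ᶜ) (extendInput S (fun i => (M' i)ᶜ) x),
          ∑ c : OutputString S x,
          chi (∀ i ∈ V, c i = a i) *
            (chi (∀ i' ∈ {i : (S.restrict M').I | x i.1 ∈ M' i.1},
                u i' = extendOutput S M' x c i') *
              (chi (∀ i' ∈ {i : (S.restrict fun i => (M' i)ᶜ).I | x i.1 ∈ (M' i.1)ᶜ},
                  v i' = extendOutput S (fun i => (M' i)ᶜ) x c i') *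
                (q' (extendInput S M' x) u *
                  q'' (extendInput S (fun i => (M' i)ᶜ) x) v))) := by
          rw [Finset.sum_comm]
          exact Finset.sum_congr rfl fun u _ => Finset.sum_comm
    _ = ∑ u : OutputString (S.restrict M') (extendInput S M' x),
          ∑ v : OutputString (S.restrict fun i => (M' i)ᶜ) (extendInput S (fun i => (M' i)ᶜ) x),
          chi ((∀ i' ∈ A₁, u i' = extendOutput S M' x a i') ∧
              (∀ i' ∈ A₂, v i' = extendOutput S (fun i => (M' i)ᶜ) x a i')) *
            (q' (extendInput S M' x) u * q'' (extendInput S (fun i => (M' i)ᶜ) x) v) := ?_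
    _ = (∑ u : OutputString (S.restrict M') (extendInput S M' x),
          chi (∀ i' ∈ A₁, u i' = extendOutput S M' x a i') * q' (extendInput S M' x) u) *
        (∑ v : OutputString (S.restrict fun i => (M' i)ᶜ) (extendInput S (fun i => (M' i)ᶜ) x),
          chi (∀ i' ∈ A₂, v i' = extendOutput S (fun i => (M' i)ᶜ) x a i') *
            q'' (extendInput S (fun i => (M' i)ᶜ) x) v) :=
          chi_sum_split _ _ _ _
    _ = marg (S.restrict M') q' (extendInput S M' x) A₁ (extendOutput S M' x a)
        * marg (S.restrict fun i => (M' i)ᶜ) q'' (extendInput S (fun i => (M' i)ᶜ) x) A₂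
            (extendOutput S (fun i => (M' i)ᶜ) x a) := by
          rw [marg_chi (S.restrict M'), marg_chi (S.restrict fun i => (M' i)ᶜ)]
  · refine Finset.sum_congr rfl fun c _ => ?_
    rw [bprod_def q' q'' x c, marg_chi (S.restrict M'), marg_chi (S.restrict fun i => (M' i)ᶜ)]
    exact chi_sum_expand _ _ _ _ _
  · refine Finset.sum_congr rfl fun u _ => Finset.sum_congr rfl fun v _ => ?_
    obtain ⟨c₀, hu0, hv0⟩ := exists_glueOut x u v
    have hQR := (glue_cond_iff x u v c₀ hu0 hv0 c₀).mpr rfl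
    have hAG := glue_agree_iff x V a u v c₀ hu0 hv0 A₁ A₂ hA₁ hA₂
    calc ∑ c : OutputString S x,
          chi (∀ i ∈ V, c i = a i) *
            (chi (∀ i' ∈ {i : (S.restrict M').I | x i.1 ∈ M' i.1},
                u i' = extendOutput S M' x c i') *
              (chi (∀ i' ∈ {i : (S.restrict fun i => (M' i)ᶜ).I | x i.1 ∈ (M' i.1)ᶜ},
                  v i' = extendOutput S (fun i => (M' i)ᶜ) x c i') *
                (q' (extendInput S M' x) u *
                  q'' (extendInput S (fun i => (M' i)ᶜ) x) v)))
        = ∑ c : OutputString S x,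
            chi ((∀ i ∈ V, c i = a i) ∧
                (∀ i' ∈ {i : (S.restrict M').I | x i.1 ∈ M' i.1},
                  u i' = extendOutput S M' x c i') ∧
                (∀ i' ∈ {i : (S.restrict fun i => (M' i)ᶜ).I | x i.1 ∈ (M' i.1)ᶜ},
                  v i' = extendOutput S (fun i => (M' i)ᶜ) x c i')) *
              (q' (extendInput S M' x) u *
                q'' (extendInput S (fun i => (M' i)ᶜ) x) v) :=
          Finset.sum_congr rfl fun c _ => chi3_merge _ _ _ _
      _ = chi ((∀ i' ∈ A₁, u i' = extendOutput S M' x a i') ∧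
            (∀ i' ∈ A₂, v i' = extendOutput S (fun i => (M' i)ᶜ) x a i')) *
            (q' (extendInput S M' x) u * q'' (extendInput S (fun i => (M' i)ᶜ) x) v) := ?_
    rw [Finset.sum_eq_single c₀]
    · congr 1
      refine chi_congr ?_
      constructor
      · rintro ⟨hal, _, _⟩
        exact hAG.mp hal
      · intro hD
        exact ⟨hAG.mpr hD, hQR.1, hQR.2⟩
    · intro c _ hc
      rw [chi_neg, zero_mul]
      rintro ⟨_, h2, h3⟩
      exact hc ((glue_cond_iff x u v c₀ hu0 hv0 c).mp ⟨h2, h3⟩)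
    · simp

set_option maxHeartbeats 1000000 in
lemma sum_bprod {q' : Behaviour (S.restrict M')}
    {q'' : Behaviour (S.restrict fun i => (M' i)ᶜ)}
    (hq' : IsBehaviour _ q') (hq'' : IsBehaviour _ q'') (x : InputString S) :
    ∑ a : OutputString S x, bprod S M' q' q'' x a = 1 := by
  calc ∑ a : OutputString S x, bprod S M' q' q'' x a
      = ∑ a : OutputString S x,
          ∑ u : OutputString (S.restrict M') (extendInput S M' x),
          ∑ v : OutputString (S.restrict fun i => (M' i)ᶜ) (extendInput S (fun i => (M' i)ᶜ) x),
          chi (∀ i' ∈ {i : (S.restrict M').I | x i.1 ∈ M' i.1},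
                u i' = extendOutput S M' x a i') *
              (chi (∀ i' ∈ {i : (S.restrict fun i => (M' i)ᶜ).I | x i.1 ∈ (M' i.1)ᶜ},
                  v i' = extendOutput S (fun i => (M' i)ᶜ) x a i') *
                (q' (extendInput S M' x) u *
                  q'' (extendInput S (fun i => (M' i)ᶜ) x) v)) := ?_
    _ = ∑ u : OutputString (S.restrict M') (extendInput S M' x),
          ∑ v : OutputString (S.restrict fun i => (M' i)ᶜ) (extendInput S (fun i => (M' i)ᶜ) x),
          ∑ a : OutputString S x,
          chi (∀ i' ∈ {i : (S.restrict M').I | x i.1 ∈ M' i.1},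
                u i' = extendOutput S M' x a i') *
              (chi (∀ i' ∈ {i : (S.restrict fun i => (M' i)ᶜ).I | x i.1 ∈ (M' i.1)ᶜ},
                  v i' = extendOutput S (fun i => (M' i)ᶜ) x a i') *
                (q' (extendInput S M' x) u *
                  q'' (extendInput S (fun i => (M' i)ᶜ) x) v)) := by
          rw [Finset.sum_comm]
          exact Finset.sum_congr rfl fun u _ => Finset.sum_comm
    _ = ∑ u : OutputString (S.restrict M') (extendInput S M' x),
          ∑ v : OutputString (S.restrict fun i => (M' i)ᶜ) (extendInput S (fun i => (M' i)ᶜ) x),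
          q' (extendInput S M' x) u * q'' (extendInput S (fun i => (M' i)ᶜ) x) v := ?_
    _ = (∑ u : OutputString (S.restrict M') (extendInput S M' x), q' (extendInput S M' x) u) *
        (∑ v : OutputString (S.restrict fun i => (M' i)ᶜ) (extendInput S (fun i => (M' i)ᶜ) x),
          q'' (extendInput S (fun i => (M' i)ᶜ) x) v) := (Finset.sum_mul_sum _ _ _ _).symm
    _ = 1 := by rw [hq'.2, hq''.2, one_mul]
  · refine Finset.sum_congr rfl fun a _ => ?_
    rw [bprod_def q' q'' x a, marg_chi (S.restrict M'), marg_chi (S.restrict fun i => (M' i)ᶜ)]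
    exact chi_sum_expand0 _ _ _ _
  · refine Finset.sum_congr rfl fun u _ => Finset.sum_congr rfl fun v _ => ?_
    obtain ⟨c₀, hu0, hv0⟩ := exists_glueOut x u v
    have hQR := (glue_cond_iff x u v c₀ hu0 hv0 c₀).mpr rfl
    calc ∑ a : OutputString S x,
          chi (∀ i' ∈ {i : (S.restrict M').I | x i.1 ∈ M' i.1},
                u i' = extendOutput S M' x a i') *
              (chi (∀ i' ∈ {i : (S.restrict fun i => (M' i)ᶜ).I | x i.1 ∈ (M' i.1)ᶜ},
                  v i' = extendOutput S (fun i => (M' i)ᶜ) x a i') *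
                (q' (extendInput S M' x) u *
                  q'' (extendInput S (fun i => (M' i)ᶜ) x) v))
        = ∑ a : OutputString S x,
            chi ((∀ i' ∈ {i : (S.restrict M').I | x i.1 ∈ M' i.1},
                  u i' = extendOutput S M' x a i') ∧
                (∀ i' ∈ {i : (S.restrict fun i => (M' i)ᶜ).I | x i.1 ∈ (M' i.1)ᶜ},
                  v i' = extendOutput S (fun i => (M' i)ᶜ) x a i')) *
              (q' (extendInput S M' x) u *
                q'' (extendInput S (fun i => (M' i)ᶜ) x) v) :=
          Finset.sum_congr rfl fun a _ => chi2b_merge _ _ _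
      _ = q' (extendInput S M' x) u * q'' (extendInput S (fun i => (M' i)ᶜ) x) v := ?_
    rw [Finset.sum_eq_single c₀]
    · rw [chi_pos hQR, one_mul]
    · intro c _ hc
      rw [chi_neg, zero_mul]
      intro hco
      exact hc ((glue_cond_iff x u v c₀ hu0 hv0 c).mp hco)
    · simp

noncomputable section
open Finset

variable {S : Scenario} {M' : ∀ i, Set (S.M i)}

lemma bprod_isBehaviour {q' : Behaviour (S.restrict M')}
    {q'' : Behaviour (S.restrict fun i => (M' i)ᶜ)}
    (hq' : IsBehaviour _ q') (hq'' : IsBehaviour _ q'') :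
    IsBehaviour S (bprod S M' q' q'') := by
  constructor
  · intro x a
    rw [bprod_def q' q'' x a]
    exact mul_nonneg (marg_nonneg (fun c => hq'.1 _ c) _ _)
      (marg_nonneg (fun c => hq''.1 _ c) _ _)
  · intro x
    exact sum_bprod hq' hq'' x

lemma bprod_ns {q' : Behaviour (S.restrict M')}
    {q'' : Behaviour (S.restrict fun i => (M' i)ᶜ)}
    (hq' : NoSignalling _ q') (hq'' : NoSignalling _ q'') :
    NoSignalling S (bprod S M' q' q'') := by
  intro i₀ x m a a' haa'
  rw [marg_bprod q' q'' x {i₀}ᶜ a _ _ rfl rfl,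
    marg_bprod q' q'' (Function.update x i₀ m) {i₀}ᶜ a' _ _ rfl rfl]
  have hset1 : {i' : (S.restrict M').I |
        i'.1 ∈ ({i₀}ᶜ : Set S.I) ∧ Function.update x i₀ m i'.1 ∈ M' i'.1}
      = {i' : (S.restrict M').I | i'.1 ∈ ({i₀}ᶜ : Set S.I) ∧ x i'.1 ∈ M' i'.1} := by
    ext i'
    simp only [Set.mem_setOf_eq]
    refine and_congr_right fun hne => ?_
    rw [update_noteq' (fun he => hne (Set.mem_singleton_iff.mpr he)) m x]
  have hset2 : {i' : (S.restrict fun i => (M' i)ᶜ).I |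
        i'.1 ∈ ({i₀}ᶜ : Set S.I) ∧ Function.update x i₀ m i'.1 ∈ (M' i'.1)ᶜ}
      = {i' : (S.restrict fun i => (M' i)ᶜ).I |
        i'.1 ∈ ({i₀}ᶜ : Set S.I) ∧ x i'.1 ∈ (M' i'.1)ᶜ} := by
    ext i'
    simp only [Set.mem_setOf_eq]
    refine and_congr_right fun hne => ?_
    rw [update_noteq' (fun he => hne (Set.mem_singleton_iff.mpr he)) m x]
  rw [hset1, hset2]
  refine congrArg₂ (· * ·) ?_ ?_
  · apply marg_ns_invariant hq'
    · rintro i' ⟨hne, hmem⟩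
      have hne' : i'.1 ≠ i₀ := fun he => hne (Set.mem_singleton_iff.mpr he)
      have hx : x i'.1 = Function.update x i₀ m i'.1 := (update_noteq' hne' m x).symm
      have hmem' : Function.update x i₀ m i'.1 ∈ M' i'.1 := hx ▸ hmem
      have e1 : extendInput S M' x i' = ⟨x i'.1, hmem⟩ := dif_pos hmem
      have e2 : extendInput S M' (Function.update x i₀ m) i'
          = ⟨Function.update x i₀ m i'.1, hmem'⟩ := dif_pos hmem'
      rw [e1, e2]
      exact Subtype.ext hx
    · rintro i' ⟨hne, hmem⟩
      have hne' : i'.1 ≠ i₀ := fun he => hne (Set.mem_singleton_iff.mpr he)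
      have hx : x i'.1 = Function.update x i₀ m i'.1 := (update_noteq' hne' m x).symm
      have hmem' : Function.update x i₀ m i'.1 ∈ M' i'.1 := hx ▸ hmem
      exact ((extendOutput_heq x a i' hmem).trans (haa' i'.1 hne')).trans
        (extendOutput_heq (Function.update x i₀ m) a' i' hmem').symm
  · apply marg_ns_invariant hq''
    · rintro i' ⟨hne, hmem⟩
      have hne' : i'.1 ≠ i₀ := fun he => hne (Set.mem_singleton_iff.mpr he)
      have hx : x i'.1 = Function.update x i₀ m i'.1 := (update_noteq' hne' m x).symm
      have hmem' : Function.update x i₀ m i'.1 ∈ (M' i'.1)ᶜ := hx ▸ hmem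
      have e1 : extendInput S (fun i => (M' i)ᶜ) x i' = ⟨x i'.1, hmem⟩ := dif_pos hmem
      have e2 : extendInput S (fun i => (M' i)ᶜ) (Function.update x i₀ m) i'
          = ⟨Function.update x i₀ m i'.1, hmem'⟩ := dif_pos hmem'
      rw [e1, e2]
      exact Subtype.ext hx
    · rintro i' ⟨hne, hmem⟩
      have hne' : i'.1 ≠ i₀ := fun he => hne (Set.mem_singleton_iff.mpr he)
      have hx : x i'.1 = Function.update x i₀ m i'.1 := (update_noteq' hne' m x).symm
      have hmem' : Function.update x i₀ m i'.1 ∈ (M' i'.1)ᶜ := hx ▸ hmem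
      exact ((extendOutput_heq (M' := fun i => (M' i)ᶜ) x a i' hmem).trans
        (haa' i'.1 hne')).trans
        (extendOutput_heq (M' := fun i => (M' i)ᶜ) (Function.update x i₀ m) a' i' hmem').symm

lemma bprod_pp {q' : Behaviour (S.restrict M')}
    {q'' : Behaviour (S.restrict fun i => (M' i)ᶜ)}
    (hq'B : IsBehaviour _ q') (hq'P : Predictable _ q') (hq''B : IsBehaviour _ q'') :
    PartPredictable S M' (bprod S M' q' q'') := by
  intro x V hV a
  rw [marg_bprod q' q'' x V a _ _ rfl rfl]
  have hA₂ : {i' : (S.restrict fun i => (M' i)ᶜ).I | i'.1 ∈ V ∧ x i'.1 ∈ (M' i'.1)ᶜ}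
      = (∅ : Set (S.restrict fun i => (M' i)ᶜ).I) := by
    ext i'
    simp only [Set.mem_setOf_eq, Set.mem_empty_iff_false, iff_false, not_and]
    intro h1 h2
    exact h2 (hV h1)
  rw [hA₂, marg_empty (hq''B.2 _), mul_one]
  exact marg_of_predictable hq'B hq'P _ _ _

lemma bprod_mem_PPNS {q' : Behaviour (S.restrict M')}
    {q'' : Behaviour (S.restrict fun i => (M' i)ᶜ)}
    (hq' : q' ∈ PNS (S.restrict M'))
    (hq'' : q'' ∈ NSset (S.restrict fun i => (M' i)ᶜ)) :
    bprod S M' q' q'' ∈ PPNS S M' :=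
  ⟨bprod_isBehaviour hq'.1 hq''.1, bprod_ns hq'.2.1 hq''.2,
    bprod_pp hq'.1 hq'.2.2 hq''.1⟩

lemma resB_pred {p : Behaviour S} (hpp : PartPredictable S M' p) :
    Predictable (S.restrict M') (resB S M' p) := by
  intro y b
  refine hpp (fullIn S M' y) {i | (M' i).Nonempty} ?_ (liftOut S M' y b)
  intro i hi
  show fullIn S M' y i ∈ M' i
  rw [fullIn_pos S M' y i hi]
  exact (y ⟨i, hi⟩).2

lemma factorize {p : Behaviour S} (hp : p ∈ PPNS S M') :
    p = bprod S M' (resB S M' p) (resB S (fun i => (M' i)ᶜ) p) := by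
  obtain ⟨hb, hns, hpp⟩ := hp
  funext x a
  have h1 : marg (S.restrict M') (resB S M' p) (extendInput S M' x)
      {i' : (S.restrict M').I | x i'.1 ∈ M' i'.1} (extendOutput S M' x a)
      = marg S p x (Fup S M' x) a := by
    rw [marg_resB]
    have hset : {i | ∃ h : (M' i).Nonempty,
        (⟨i, h⟩ : (S.restrict M').I) ∈ {i' : (S.restrict M').I | x i'.1 ∈ M' i'.1}}
          = Fup S M' x := by
      ext i
      constructor
      · rintro ⟨h, hm⟩
        exact hm
      · intro hm
        exact ⟨⟨x i, hm⟩, hm⟩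
    rw [hset]
    apply marg_ns_invariant hns
    · intro i hi
      rw [fullIn_pos S M' (extendInput S M' x) i ⟨x i, hi⟩]
      exact extendInput_val x ⟨i, ⟨x i, hi⟩⟩ hi
    · intro i hi
      exact (liftOut_heq S M' _ _ i ⟨x i, hi⟩).trans
        (extendOutput_heq x a ⟨i, ⟨x i, hi⟩⟩ hi)
  have h2 : marg (S.restrict fun i => (M' i)ᶜ) (resB S (fun i => (M' i)ᶜ) p)
      (extendInput S (fun i => (M' i)ᶜ) x)
      {i' : (S.restrict fun i => (M' i)ᶜ).I | x i'.1 ∈ (M' i'.1)ᶜ}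
      (extendOutput S (fun i => (M' i)ᶜ) x a)
      = marg S p x (Fup S M' x)ᶜ a := by
    rw [marg_resB]
    have hset : {i | ∃ h : ((M' i)ᶜ : Set (S.M i)).Nonempty,
        (⟨i, h⟩ : (S.restrict fun i => (M' i)ᶜ).I) ∈
          {i' : (S.restrict fun i => (M' i)ᶜ).I | x i'.1 ∈ (M' i'.1)ᶜ}}
          = (Fup S M' x)ᶜ := by
      ext i
      constructor
      · rintro ⟨h, hm⟩
        exact hm
      · intro hm
        exact ⟨⟨x i, hm⟩, hm⟩
    rw [hset]
    apply marg_ns_invariant hns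
    · intro i hi
      rw [fullIn_pos S (fun i => (M' i)ᶜ) (extendInput S (fun i => (M' i)ᶜ) x) i ⟨x i, hi⟩]
      exact extendInput_val (M' := fun i => (M' i)ᶜ) x ⟨i, ⟨x i, hi⟩⟩ hi
    · intro i hi
      exact (liftOut_heq S (fun i => (M' i)ᶜ) _ _ i ⟨x i, hi⟩).trans
        (extendOutput_heq (M' := fun i => (M' i)ᶜ) x a ⟨i, ⟨x i, hi⟩⟩ hi)
  calc p x a
      = marg S p x (Fup S M' x) a * marg S p x (Fup S M' x)ᶜ a :=
        behaviour_split hb x (Fup S M' x) a (hpp x (Fup S M' x) subset_rfl a)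
    _ = bprod S M' (resB S M' p) (resB S (fun i => (M' i)ᶜ) p) x a := by
        rw [bprod_def (resB S M' p) (resB S (fun i => (M' i)ᶜ) p) x a, h1, h2]

lemma bprod_add (q₁ q₂ : Behaviour (S.restrict M'))
    (q'' : Behaviour (S.restrict fun i => (M' i)ᶜ)) :
    bprod S M' (q₁ + q₂) q'' = bprod S M' q₁ q'' + bprod S M' q₂ q'' := by
  funext x a
  show bprod S M' (q₁ + q₂) q'' x a = bprod S M' q₁ q'' x a + bprod S M' q₂ q'' x a
  rw [bprod_def (q₁ + q₂) q'' x a, bprod_def q₁ q'' x a, bprod_def q₂ q'' x a,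
    marg_add, add_mul]

lemma bprod_smul (c : ℝ) (q : Behaviour (S.restrict M'))
    (q'' : Behaviour (S.restrict fun i => (M' i)ᶜ)) :
    bprod S M' (c • q) q'' = c • bprod S M' q q'' := by
  funext x a
  show bprod S M' (c • q) q'' x a = c * bprod S M' q q'' x a
  rw [bprod_def (c • q) q'' x a, bprod_def q q'' x a, marg_smul, mul_assoc]

end

noncomputable section

/-- For the disjoint bipartition of `S` determined by `M'`,
`conv(B(S') ⊙ NS(S'^⊥)) = PD(S, M')`. -/
theorem convexHull_bprod_bell_ns_eq_pd (S : Scenario) [Nonempty S.I]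
    (M' : ∀ i, Set (S.M i)) :
    convexHull ℝ
        (bprodSet S M' (BellSet (S.restrict M')) (NSset (S.restrict fun i => (M' i)ᶜ)))
      = PD S M' := by
  apply Set.Subset.antisymm
  · refine convexHull_min ?_ (convex_convexHull ℝ _)
    rintro P ⟨q', hq', q'', hq'', rfl⟩
    have hlin : IsLinearMap ℝ (fun r : Behaviour (S.restrict M') => bprod S M' r q'') :=
      ⟨fun q₁ q₂ => bprod_add q₁ q₂ q'', fun c q => bprod_smul c q q''⟩
    have himg : bprod S M' q' q'' ∈
        (fun r : Behaviour (S.restrict M') => bprod S M' r q'') ''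
          (convexHull ℝ (PNS (S.restrict M'))) := ⟨q', hq', rfl⟩
    rw [hlin.image_convexHull] at himg
    have hsub : (fun r : Behaviour (S.restrict M') => bprod S M' r q'') ''
        (PNS (S.restrict M')) ⊆ PPNS S M' := by
      rintro _ ⟨q₀, hq₀, rfl⟩
      exact bprod_mem_PPNS hq₀ hq''
    exact convexHull_mono hsub himg
  · exact convexHull_min
      (fun p hp => subset_convexHull ℝ _
        ⟨resB S M' p, subset_convexHull ℝ _
            ⟨resB_isBehaviour hp.1, resB_ns hp.2.1, resB_pred hp.2.2⟩,
          resB S (fun i => (M' i)ᶜ) p, ⟨resB_isBehaviour hp.1, resB_ns hp.2.1⟩,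
          (factorize hp).symm⟩)
      (convex_convexHull ℝ _)


end
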